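/- Let p : X → B and p' : X' → B' be surjective maps of metric spaces such that every fiber preimage determines distances: d(b₁,b₂) = d(p⁻¹(b₁), p⁻¹(b₂)) = d_H(p⁻¹(b₁), p⁻¹(b₂)) for all b₁,b₂ ∈ B (and similarly for p'). Let f : X → X' be C''-Lipschitz with inverse g, and φ : B → B' a bijection with inverse ψ. Suppose there exist constants C, C' > 0 with d(φ(p(x)), p'(f(x))) < C for all x ∈ X and d(p(g(x')), ψ(p'(x'))) < C' for all x' ∈ X'. Then for every b ∈ B, the Hausdorff distance d_H(f(p⁻¹(b)), (p')⁻¹(φ(b))) ≤ max{C, C' · C''}. -/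

import Mathlib

/-
A point `x` of the fiber over `b` is mapped by `f` into the fiber over `p' (f x)`, whose
Hausdorff distance to the fiber over `φ b` is `edist (p' (f x)) (φ b) < C`. Conversely, a
point `x'` of the fiber over `φ b` is sent by `g` into the fiber over `p (g x')`, which lies
within Hausdorff distance `edist (p (g x')) b < C'` of the fiber over `b`; applying the
`C''`-Lipschitz map `f` brings `x' = f (g x')` within `C' * C''` of `f '' (p ⁻¹' {b})`.
-/

open EMetric Metric Set NNReal ENNReal

theorem infEDist_preimage_singleton_le_edist {X B : Type*} [PseudoEMetricSpace X]
    [PseudoEMetricSpace B] {p : X → B}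
    (hp : ∀ b₁ b₂, hausdorffEDist (p ⁻¹' {b₁}) (p ⁻¹' {b₂}) ≤ edist b₁ b₂) (x : X) (b : B) :
    infEDist x (p ⁻¹' {b}) ≤ edist (p x) b :=
  (infEDist_le_hausdorffEDist_of_mem (s := p ⁻¹' {p x}) rfl).trans (hp _ _)

theorem LipschitzWith.infEDist_image_le_of_infEDist_lt {X Y : Type*} [PseudoEMetricSpace X]
    [PseudoEMetricSpace Y] {K : ℝ≥0} {f : X → Y} (hf : LipschitzWith K f) {x : X} {s : Set X}
    {r : ℝ≥0∞} (h : infEDist x s < r) :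
    infEDist (f x) (f '' s) ≤ r * K := by
  obtain ⟨y, hy, hxy⟩ := infEDist_lt_iff.mp h
  calc infEDist (f x) (f '' s) ≤ edist (f x) (f y) :=
        infEDist_le_edist_of_mem (mem_image_of_mem f hy)
    _ ≤ K * edist x y := hf.edist_le_mul x y
    _ ≤ r * K := by rw [mul_comm]; gcongr

theorem fiber_respecting_hausdorff_bound_general
    {X X' B B' : Type*} [MetricSpace X] [MetricSpace X'] [MetricSpace B] [MetricSpace B']
    (p : X → B) (p' : X' → B')
    (hd2 : ∀ b₁ b₂ : B, edist b₁ b₂ = hausdorffEdist (p ⁻¹' {b₁}) (p ⁻¹' {b₂}))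
    (hd2' : ∀ b₁ b₂ : B', edist b₁ b₂ = hausdorffEdist (p' ⁻¹' {b₁}) (p' ⁻¹' {b₂}))
    (C'' : NNReal) (f : X → X') (hf : LipschitzWith C'' f)
    (g : X' → X) (hfg : Function.RightInverse g f)
    (φ : B → B') (ψ : B' → B) (hψφ : Function.LeftInverse ψ φ)
    (C C' : ENNReal)
    (hb : ∀ x : X, edist (φ (p x)) (p' (f x)) < C)
    (hb' : ∀ x' : X', edist (p (g x')) (ψ (p' x')) < C') :
    ∀ b : B, hausdorffEdist (f '' (p ⁻¹' {b})) (p' ⁻¹' {φ b}) ≤ max C (C' * C'') := by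
  intro b
  have hfiber := infEDist_preimage_singleton_le_edist fun b₁ b₂ ↦ (hd2 b₁ b₂).ge
  have hfiber' := infEDist_preimage_singleton_le_edist fun b₁ b₂ ↦ (hd2' b₁ b₂).ge
  apply hausdorffEDist_le_of_infEDist
  · rintro _ ⟨x, rfl, rfl⟩
    calc infEDist (f x) (p' ⁻¹' {φ (p x)}) ≤ edist (p' (f x)) (φ (p x)) := hfiber' _ _
      _ ≤ C := by rw [edist_comm]; exact (hb x).le
      _ ≤ _ := le_max_left _ _
  · intro x' (hx' : p' x' = φ b)
    have hgx' : infEDist (g x') (p ⁻¹' {b}) < C' :=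
      calc infEDist (g x') (p ⁻¹' {b}) ≤ edist (p (g x')) b := hfiber _ _
        _ < C' := by simpa only [hx', hψφ b] using hb' x'
    rw [← hfg x']
    exact (hf.infEDist_image_le_of_infEDist_lt hgx').trans (le_max_right _ _)

/-- `p : X → B` and `p' : X' → B'` are distance respecting projections of metric spaces
(fiber-to-fiber infimum distance and Hausdorff distance both equal the base distance).
If `f : X → X'` is a `C''`-Lipschitz map with inverse `g`, `φ : B → B'` a bijection with
inverse `ψ`, and the diagrams commute up to bounded error (`edist (φ (p x)) (p' (f x)) < C`
and `edist (p (g x')) (ψ (p' x')) < C'`), then for every `b ∈ B` the Hausdorff distance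
between `f(p⁻¹ b)` and `p'⁻¹(φ b)` is at most `max C (C' * C'')`. -/
theorem fiber_respecting_hausdorff_bound
    {X X' B B' : Type*} [MetricSpace X] [MetricSpace X'] [MetricSpace B] [MetricSpace B']
    (p : X → B) (p' : X' → B')
    (hp : Function.Surjective p) (hp' : Function.Surjective p')
    (hd1 : ∀ b₁ b₂ : B, edist b₁ b₂ = ⨅ x ∈ p ⁻¹' {b₁}, ⨅ y ∈ p ⁻¹' {b₂}, edist x y)
    (hd2 : ∀ b₁ b₂ : B, edist b₁ b₂ = hausdorffEdist (p ⁻¹' {b₁}) (p ⁻¹' {b₂}))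
    (hd1' : ∀ b₁ b₂ : B', edist b₁ b₂ = ⨅ x ∈ p' ⁻¹' {b₁}, ⨅ y ∈ p' ⁻¹' {b₂}, edist x y)
    (hd2' : ∀ b₁ b₂ : B', edist b₁ b₂ = hausdorffEdist (p' ⁻¹' {b₁}) (p' ⁻¹' {b₂}))
    (C'' : NNReal) (f : X → X') (hf : LipschitzWith C'' f)
    (g : X' → X) (hgf : Function.LeftInverse g f) (hfg : Function.RightInverse g f)
    (φ : B → B') (ψ : B' → B) (hψφ : Function.LeftInverse ψ φ)
    (hφψ : Function.RightInverse ψ φ)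
    (C C' : ENNReal) (hC : 0 < C) (hC' : 0 < C')
    (hb : ∀ x : X, edist (φ (p x)) (p' (f x)) < C)
    (hb' : ∀ x' : X', edist (p (g x')) (ψ (p' x')) < C') :
    ∀ b : B, hausdorffEdist (f '' (p ⁻¹' {b})) (p' ⁻¹' {φ b}) ≤ max C (C' * C'') :=
  fiber_respecting_hausdorff_bound_general p p' hd2 hd2' C'' f hf g hfg φ ψ hψφ C C' hb hb'
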